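/- For every natural number n, there exist a finite alphabet Σ and regular languages S, B ⊆ Σ* with B ⊆ S and B extension closed with respect to S, together with a DFA M whose accepted language is a failure explanation for S and B, such that every DFA whose accepted language is an early detection failure explanation for S and B has more than n states in excess of the number of states of M. -/

import Mathlib

/-- `Pref L` is the set of prefixes of words of `L`. -/
def Pref {α : Type} (L : Set (List α)) : Set (List α) := {w | ∃ u, w ++ u ∈ L}

/-- `B` is extension closed with respect to `S`. -/
def ExtClosedWrt {α : Type} (S B : Set (List α)) : Prop :=
  ∀ w ∈ B, ∀ u : List α, w ++ u ∈ S → w ++ u ∈ B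

/-- `L` is a failure explanation for `S` and `B`. -/
def IsFE {α : Type} (S B L : Set (List α)) : Prop := B ⊆ L ∧ L ∩ (S \ B) = ∅

/-- `L` is an early detection failure explanation for `S` and `B`. -/
def IsEDFE {α : Type} (S B L : Set (List α)) : Prop :=
  IsFE S B L ∧ ∀ w, w ∈ Pref B → w ∉ Pref (S \ B) → w ∈ L

/-- `L` is a regular language: some DFA with finitely many states accepts exactly `L`. -/
def Regular {α : Type} (L : Set (List α)) : Prop :=
  ∃ (σ : Type) (_ : Fintype σ) (M : DFA α σ), ∀ w, w ∈ M.accepts ↔ w ∈ L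

/-!
Over `Bool` take `B = {0ᵐ11}` and `S = B ∪ {0ᵏ1 | k < m}`. The two-state parity automaton
(accept iff the number of `1`s is even) already separates `B` from `S \ B`. An early detection
explanation, however, must accept `0ᵐ1`: it is a prefix of `B` but too long to prefix a word
of `S \ B`. For `i < j ≤ m` the suffix `0ᵐ⁻ʲ1` sends `0ʲ` to `0ᵐ1` and `0ⁱ` into `S \ B`, so
a DFA accepting such an explanation reaches `m + 1` distinct states on the words `0ⁱ`, `i ≤ m`.
-/

open List

/-- Myhill–Nerode: every left quotient of `L` is a set of suffixes of words of `L`. -/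
theorem Language.IsRegular.of_finite {α : Type*} {L : Language α}
    (h : (L : Set (List α)).Finite) : L.IsRegular := by
  refine .of_finite_range_leftQuotient <|
    (h.biUnion fun w _ => w.tails.finite_toSet).finite_subsets.subset ?_
  rintro _ ⟨x, rfl⟩ y hy
  exact Set.mem_biUnion hy ((mem_tails _ _).2 (suffix_append x y))

theorem regular_of_finite {α : Type} {L : Set (List α)} (h : L.Finite) : Regular L :=
  let ⟨σ, hσ, M, hM⟩ := Language.IsRegular.of_finite (L := L) h
  ⟨σ, hσ, M, fun _ => by rw [hM]; rfl⟩

theorem IsEDFE.eval_ne {α τ : Type} {S B : Set (List α)} {N : DFA α τ}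
    (hN : IsEDFE S B {w | w ∈ N.accepts}) {x y u : List α}
    (hxu : x ++ u ∈ Pref B) (hxu' : x ++ u ∉ Pref (S \ B)) (hyu : y ++ u ∈ S \ B) :
    N.eval x ≠ N.eval y := by
  intro hxy
  have hx : x ++ u ∈ N.accepts := hN.2 _ hxu hxu'
  have hy : u ∈ N.accepts.leftQuotient y := by
    rwa [Language.leftQuotient_accepts_apply, ← hxy, ← Language.leftQuotient_accepts_apply]
  exact (Set.eq_empty_iff_forall_notMem.1 hN.1.2) _ ⟨hy, hyu⟩

def failingTrace (m : ℕ) : List Bool := replicate m false ++ [true, true]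

def passingTraces (m : ℕ) : Set (List Bool) := (fun k => replicate k false ++ [true]) '' Set.Iio m

def traces (m : ℕ) : Set (List Bool) := insert (failingTrace m) (passingTraces m)

section
variable {m : ℕ}

lemma length_le_of_mem_passingTraces {w : List Bool} (hw : w ∈ passingTraces m) :
    w.length ≤ m := by
  obtain ⟨k, hk, rfl⟩ := hw
  simpa using Set.mem_Iio.1 hk

lemma failingTrace_notMem_passingTraces : failingTrace m ∉ passingTraces m := fun h => by
  simpa [failingTrace] using length_le_of_mem_passingTraces h

lemma traces_sdiff_failingTrace : traces m \ {failingTrace m} = passingTraces m :=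
  Set.insert_sdiff_self_of_notMem failingTrace_notMem_passingTraces

lemma extClosedWrt_traces : ExtClosedWrt (traces m) {failingTrace m} := by
  rintro w rfl u (h | h)
  · exact h
  · simpa [failingTrace] using length_le_of_mem_passingTraces h

lemma regular_traces : Regular (traces m) :=
  regular_of_finite (((Set.finite_Iio m).image _).insert _)

def parityDFA : DFA Bool Bool where
  step s a := xor s a
  start := false
  accept := {false}

@[simp] lemma parityDFA_step (s a : Bool) : parityDFA.step s a = xor s a := rfl

@[simp] lemma parityDFA_start : parityDFA.start = false := rfl

@[simp] lemma parityDFA_accept : parityDFA.accept = {false} := rfl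

lemma parityDFA_evalFrom_replicate_false (s : Bool) (k : ℕ) :
    parityDFA.evalFrom s (replicate k false) = s := by
  induction k with
  | zero => rfl
  | succ k ih => simpa [replicate_succ] using ih

lemma isFE_parityDFA : IsFE (traces m) {failingTrace m} {w | w ∈ parityDFA.accepts} := by
  refine ⟨?_, ?_⟩
  · rintro _ rfl
    simp [failingTrace, DFA.mem_accepts, DFA.eval, DFA.evalFrom_of_append,
      parityDFA_evalFrom_replicate_false]
  · rw [traces_sdiff_failingTrace, Set.eq_empty_iff_forall_notMem]
    rintro _ ⟨hw, k, -, rfl⟩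
    simp [DFA.mem_accepts, DFA.eval, DFA.evalFrom_of_append,
      parityDFA_evalFrom_replicate_false] at hw

lemma IsEDFE.eval_replicate_ne {τ : Type} {N : DFA Bool τ}
    (hN : IsEDFE (traces m) {failingTrace m} {w | w ∈ N.accepts}) {i j : ℕ} (hij : i < j)
    (hjm : j ≤ m) : N.eval (replicate i false) ≠ N.eval (replicate j false) := by
  have hj : replicate j false ++ (replicate (m - j) false ++ [true]) =
      replicate m false ++ [true] := by
    rw [← append_assoc, ← replicate_add, Nat.add_sub_cancel' hjm]
  refine (hN.eval_ne (u := replicate (m - j) false ++ [true]) ⟨[true], ?_⟩ ?_ ?_).symm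
  · rw [hj]; simp [failingTrace]
  · rw [hj, traces_sdiff_failingTrace]
    rintro ⟨v, hv⟩
    simpa using length_le_of_mem_passingTraces hv
  · rw [traces_sdiff_failingTrace, ← append_assoc, ← replicate_add]
    exact ⟨i + (m - j), Set.mem_Iio.2 (by omega), rfl⟩

end

/-- For every `n`, there is a finite alphabet with regular `S`, `B` (with `B ⊆ S`
extension closed w.r.t. `S`) and a DFA `M` accepting a failure explanation, such that
every DFA accepting an early detection failure explanation has more than `n` states
in excess of the number of states of `M`. -/
theorem stmt14 (n : ℕ) :
    ∃ (α : Type) (_ : Fintype α) (S B : Set (List α)),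
      B ⊆ S ∧ ExtClosedWrt S B ∧ Regular S ∧ Regular B ∧
      ∃ (σ : Type) (instσ : Fintype σ) (M : DFA α σ),
        IsFE S B {w | w ∈ M.accepts} ∧
        ∀ (τ : Type) [Fintype τ], ∀ N : DFA α τ,
          IsEDFE S B {w | w ∈ N.accepts} →
            @Fintype.card σ instσ + n < Fintype.card τ := by
  refine ⟨Bool, inferInstance, traces (n + 2), {failingTrace (n + 2)}, by simp [traces],
    extClosedWrt_traces, regular_traces, regular_of_finite (Set.finite_singleton _),
    Bool, inferInstance, parityDFA, isFE_parityDFA, fun τ _ N hN => ?_⟩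
  have hinj : Function.Injective fun i : Fin (n + 3) => N.eval (replicate i false) :=
    Function.Injective.of_lt_imp_ne fun i j hij => hN.eval_replicate_ne hij (by omega)
  have := Fintype.card_le_of_injective _ hinj
  simp only [Fintype.card_fin, Fintype.card_bool] at this ⊢
  omega
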